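/- Nullability equivalence: for a well-formed, un-normalized parsing expression φ (kept in simplified form), ν(φ) implies match([φ]_k) = {k}, and λ(φ) implies back([φ]_k) = {k}. -/

import Mathlib

namespace PEG

variable {N σ : Type}

/-- Parsing expressions. -/
inductive PExp (N σ : Type) where
  | chr (a : σ)
  | eps
  | fail
  | nt (A : N)
  | neg (α : PExp N σ)
  | seq (α β : PExp N σ)
  | alt (α β : PExp N σ)

/-- Big-step PEG semantics: `Eval R φ s r` means `φ(s) = r`
(`none` = fail, `some s'` = matched leaving suffix `s'`). -/
inductive Eval (R : N → PExp N σ) : PExp N σ → List σ → Option (List σ) → Prop where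
  | chr_succ (a : σ) (s : List σ) : Eval R (.chr a) (a :: s) (some s)
  | chr_fail (a : σ) (s : List σ) : (∀ s', s ≠ a :: s') → Eval R (.chr a) s none
  | eps (s : List σ) : Eval R .eps s (some s)
  | fail (s : List σ) : Eval R .fail s none
  | nt (A : N) (s : List σ) (r : Option (List σ)) :
      Eval R (R A) s r → Eval R (.nt A) s r
  | neg_succ (α : PExp N σ) (s : List σ) :
      Eval R α s none → Eval R (.neg α) s (some s)
  | neg_fail (α : PExp N σ) (s s' : List σ) :
      Eval R α s (some s') → Eval R (.neg α) s none
  | seq_succ (α β : PExp N σ) (s s' : List σ) (r : Option (List σ)) :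
      Eval R α s (some s') → Eval R β s' r → Eval R (.seq α β) s r
  | seq_fail (α β : PExp N σ) (s : List σ) :
      Eval R α s none → Eval R (.seq α β) s none
  | alt_succ (α β : PExp N σ) (s s' : List σ) :
      Eval R α s (some s') → Eval R (.alt α β) s (some s')
  | alt_fail (α β : PExp N σ) (s : List σ) (r : Option (List σ)) :
      Eval R α s none → Eval R β s r → Eval R (.alt α β) s r

/-- The language of a parsing expression. -/
def Lang (R : N → PExp N σ) (φ : PExp N σ) : Set (List σ) :=
  {s | ∃ s', Eval R φ s (some s')}

/-- Nullability predicate ν (least fixed point). -/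
inductive Nu (R : N → PExp N σ) : PExp N σ → Prop where
  | eps : Nu R .eps
  | nt (A : N) : Nu R (R A) → Nu R (.nt A)
  | seq (α β : PExp N σ) : Nu R α → Nu R β → Nu R (.seq α β)
  | altl (α β : PExp N σ) : Nu R α → Nu R (.alt α β)
  | altr (α β : PExp N σ) : Nu R β → Nu R (.alt α β)

/-- Weak nullability predicate λ (least fixed point). -/
inductive Lam (R : N → PExp N σ) : PExp N σ → Prop where
  | eps : Lam R .eps
  | nt (A : N) : Lam R (R A) → Lam R (.nt A)
  | neg (α : PExp N σ) : Lam R (.neg α)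
  | seq (α β : PExp N σ) : Lam R α → Lam R β → Lam R (.seq α β)
  | altl (α β : PExp N σ) : Lam R α → Lam R (.alt α β)
  | altr (α β : PExp N σ) : Lam R β → Lam R (.alt α β)

/-- One step of left-expansion: `LEStep R φ γ` iff `γ ∈ LE(φ)`. -/
inductive LEStep (R : N → PExp N σ) : PExp N σ → PExp N σ → Prop where
  | nt (A : N) : LEStep R (.nt A) (R A)
  | neg (α : PExp N σ) : LEStep R (.neg α) α
  | seq1 (α β : PExp N σ) : LEStep R (.seq α β) α
  | seq2 (α β : PExp N σ) : Lam R α → LEStep R (.seq α β) β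
  | alt1 (α β : PExp N σ) : LEStep R (.alt α β) α
  | alt2 (α β : PExp N σ) : LEStep R (.alt α β) β

/-- One step of the immediate subexpression function SUB. -/
inductive SubStep (R : N → PExp N σ) : PExp N σ → PExp N σ → Prop where
  | nt (A : N) : SubStep R (.nt A) (R A)
  | neg (α : PExp N σ) : SubStep R (.neg α) α
  | seq1 (α β : PExp N σ) : SubStep R (.seq α β) α
  | seq2 (α β : PExp N σ) : SubStep R (.seq α β) β
  | alt1 (α β : PExp N σ) : SubStep R (.alt α β) α
  | alt2 (α β : PExp N σ) : SubStep R (.alt α β) β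

/-- LE⁺(φ): the transitive closure of left-expansion. -/
def LEPlus (R : N → PExp N σ) (φ : PExp N σ) : Set (PExp N σ) :=
  {γ | Relation.TransGen (LEStep R) φ γ}

/-- SUB⁺(φ): the transitive closure of the subexpression function. -/
def SubPlus (R : N → PExp N σ) (φ : PExp N σ) : Set (PExp N σ) :=
  {γ | Relation.TransGen (SubStep R) φ γ}

/-- A parsing expression is well-formed if no expression in {φ} ∪ SUB⁺(φ)
left-recursively expands itself. -/
def WellFormed (R : N → PExp N σ) (φ : PExp N σ) : Prop :=
  ∀ γ, (γ = φ ∨ γ ∈ SubPlus R φ) → γ ∉ LEPlus R γ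

end PEG

namespace PEG

variable {N σ : Type}

/-- Annotated parsing expressions: `eps j` is ε_j, `neg j α` is !_jα, and
`seq α β fs` is αβ[fs] where `fs` is the list of lookahead followers
(pairs of an index `j` and the repeated derivative β_j of β from index j). -/
inductive AExp (N σ : Type) where
  | chr (a : σ)
  | eps (j : ℕ)
  | fail
  | neg (j : ℕ) (α : AExp N σ)
  | seq (α : AExp N σ) (β : PExp N σ) (fs : List (ℕ × AExp N σ))
  | alt (α β : AExp N σ)

/-- `BackMem φ j` iff `j ∈ back(φ)`. -/
inductive BackMem : AExp N σ → ℕ → Prop where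
  | eps (j : ℕ) : BackMem (.eps j) j
  | neg (j : ℕ) (α : AExp N σ) : BackMem (.neg j α) j
  | seq (α : AExp N σ) (β : PExp N σ) (fs : List (ℕ × AExp N σ)) (j : ℕ) (γ : AExp N σ) (m : ℕ) :
      (j, γ) ∈ fs → BackMem γ m → BackMem (.seq α β fs) m
  | altl (α β : AExp N σ) (m : ℕ) : BackMem α m → BackMem (.alt α β) m
  | altr (α β : AExp N σ) (m : ℕ) : BackMem β m → BackMem (.alt α β) m

/-- `MatchMem φ j` iff `j ∈ match(φ)`. -/
inductive MatchMem : AExp N σ → ℕ → Prop where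
  | eps (j : ℕ) : MatchMem (.eps j) j
  | seq (α : AExp N σ) (β : PExp N σ) (fs : List (ℕ × AExp N σ)) (j : ℕ) (γ : AExp N σ) (m : ℕ) :
      MatchMem α j → (j, γ) ∈ fs → MatchMem γ m → MatchMem (.seq α β fs) m
  | alt (α β : AExp N σ) (m : ℕ) : MatchMem β m → MatchMem (.alt α β) m

/-- The normalization relation: `Norm R i φ ψ` means `[φ]_i = ψ`. -/
inductive Norm (R : N → PExp N σ) : ℕ → PExp N σ → AExp N σ → Prop where
  | chr (i : ℕ) (a : σ) : Norm R i (.chr a) (.chr a)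
  | eps (i : ℕ) : Norm R i .eps (.eps i)
  | fail (i : ℕ) : Norm R i .fail .fail
  | nt (i : ℕ) (A : N) (ψ : AExp N σ) : Norm R i (R A) ψ → Norm R i (.nt A) ψ
  | neg (i : ℕ) (α : PExp N σ) (ψ : AExp N σ) :
      Norm R i α ψ → Norm R i (.neg α) (.neg i ψ)
  | seq_lam (i : ℕ) (α β : PExp N σ) (ψ χ : AExp N σ) : Lam R β →
      Norm R i α ψ → Norm R i β χ → Norm R i (.seq α β) (.seq ψ β [(i, χ)])
  | seq_nolam (i : ℕ) (α β : PExp N σ) (ψ : AExp N σ) : ¬ Lam R β →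
      Norm R i α ψ → Norm R i (.seq α β) (.seq ψ β [])
  | alt (i : ℕ) (α β : PExp N σ) (ψ χ : AExp N σ) :
      Norm R i α ψ → Norm R i β χ → Norm R i (.alt α β) (.alt ψ χ)

/-- Normalized annotated expressions: every sequence expression has a
functional follower list whose index set equals `back` of its first component. -/
inductive ANorm (R : N → PExp N σ) : AExp N σ → Prop where
  | chr (a : σ) : ANorm R (.chr a)
  | eps (j : ℕ) : ANorm R (.eps j)
  | fail : ANorm R .fail
  | neg (j : ℕ) (α : AExp N σ) : ANorm R α → ANorm R (.neg j α)
  | seq (α : AExp N σ) (β : PExp N σ) (fs : List (ℕ × AExp N σ)) :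
      ANorm R α → (∀ p ∈ fs, ANorm R p.2) →
      (∀ j, (∃ γ, (j, γ) ∈ fs) ↔ BackMem α j) →
      (∀ j γ γ', (j, γ) ∈ fs → (j, γ') ∈ fs → γ = γ') →
      ANorm R (.seq α β fs)
  | alt (α β : AExp N σ) : ANorm R α → ANorm R β → ANorm R (.alt α β)

/-- All annotation indices of the expression are at most `k`. -/
inductive IdxLE (k : ℕ) : AExp N σ → Prop where
  | chr (a : σ) : IdxLE k (.chr a)
  | eps (j : ℕ) : j ≤ k → IdxLE k (.eps j)
  | fail : IdxLE k .fail
  | neg (j : ℕ) (α : AExp N σ) : j ≤ k → IdxLE k α → IdxLE k (.neg j α)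
  | seq (α : AExp N σ) (β : PExp N σ) (fs : List (ℕ × AExp N σ)) :
      IdxLE k α → (∀ p ∈ fs, p.1 ≤ k) → (∀ p ∈ fs, IdxLE k p.2) → IdxLE k (.seq α β fs)
  | alt (α β : AExp N σ) : IdxLE k α → IdxLE k β → IdxLE k (.alt α β)

/-- `φ` is `k`-normalized. -/
def KNorm (R : N → PExp N σ) (k : ℕ) (φ : AExp N σ) : Prop :=
  ANorm R φ ∧ IdxLE k φ

/-- Semantics of annotated expressions over the full input `w`.
Positions count consumed characters, so position `p` corresponds to the
input suffix after index `p`, i.e. `w.drop p`.  `AEval R w φ k r` means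
`φ(s^k) = r` where `s^k = w.drop k` (`r = none` is `fail`, `r = some p`
is the suffix `w.drop p`). -/
inductive AEval (R : N → PExp N σ) (w : List σ) : AExp N σ → ℕ → Option ℕ → Prop where
  | chr_succ (a : σ) (k : ℕ) : w[k]? = some a → AEval R w (.chr a) k (some (k+1))
  | chr_fail (a : σ) (k : ℕ) : w[k]? ≠ some a → AEval R w (.chr a) k none
  | eps (j k : ℕ) : AEval R w (.eps j) k (some j)
  | fail (k : ℕ) : AEval R w .fail k none
  | neg_succ (j : ℕ) (α : AExp N σ) (k : ℕ) :
      AEval R w α k none → AEval R w (.neg j α) k (some j)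
  | neg_fail (j : ℕ) (α : AExp N σ) (k m : ℕ) :
      AEval R w α k (some m) → AEval R w (.neg j α) k none
  | seq_succ (α : AExp N σ) (β : PExp N σ) (fs : List (ℕ × AExp N σ)) (k m : ℕ) (s' : List σ) :
      AEval R w α k (some m) → Eval R β (w.drop m) (some s') →
      AEval R w (.seq α β fs) k (some (w.length - s'.length))
  | seq_fail1 (α : AExp N σ) (β : PExp N σ) (fs : List (ℕ × AExp N σ)) (k : ℕ) :
      AEval R w α k none → AEval R w (.seq α β fs) k none
  | seq_fail2 (α : AExp N σ) (β : PExp N σ) (fs : List (ℕ × AExp N σ)) (k m : ℕ) :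
      AEval R w α k (some m) → Eval R β (w.drop m) none →
      AEval R w (.seq α β fs) k none
  | alt_succ (α β : AExp N σ) (k m : ℕ) :
      AEval R w α k (some m) → AEval R w (.alt α β) k (some m)
  | alt_fail (α β : AExp N σ) (k : ℕ) (r : Option ℕ) :
      AEval R w α k none → AEval R w β k r → AEval R w (.alt α β) k r

/-- The derivative step `d_{c,i}` as a relation: `Deriv R c i φ ψ` means
`d_{c,i}(φ) = ψ`.  Here `c : Option σ`, with `none` standing for the
end-of-string terminal `#`. -/
inductive Deriv (R : N → PExp N σ) : Option σ → ℕ → AExp N σ → AExp N σ → Prop where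
  | chr_eq (a : σ) (i : ℕ) : Deriv R (some a) i (.chr a) (.eps i)
  | chr_ne (c : Option σ) (i : ℕ) (a : σ) : c ≠ some a → Deriv R c i (.chr a) .fail
  | eps (c : Option σ) (i j : ℕ) : Deriv R c i (.eps j) (.eps j)
  | fail (c : Option σ) (i : ℕ) : Deriv R c i .fail .fail
  | neg_match (c : Option σ) (i j : ℕ) (α α' : AExp N σ) (m : ℕ) :
      Deriv R c i α α' → MatchMem α' m → Deriv R c i (.neg j α) .fail
  | neg_fail (c : Option σ) (i j : ℕ) (α : AExp N σ) :
      Deriv R c i α .fail → Deriv R c i (.neg j α) (.eps j)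
  | neg_other (c : Option σ) (i j : ℕ) (α α' : AExp N σ) :
      Deriv R c i α α' → (∀ m, ¬ MatchMem α' m) → α' ≠ .fail →
      Deriv R c i (.neg j α) (.neg j α')
  | seq_fail (c : Option σ) (i : ℕ) (α : AExp N σ) (β : PExp N σ) (fs : List (ℕ × AExp N σ)) :
      Deriv R c i α .fail → Deriv R c i (.seq α β fs) .fail
  | seq_eps_i (a : σ) (i : ℕ) (α : AExp N σ) (β : PExp N σ) (fs : List (ℕ × AExp N σ)) (χ : AExp N σ) :
      Deriv R (some a) i α (.eps i) → Norm R i β χ →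
      Deriv R (some a) i (.seq α β fs) χ
  | seq_eps_i_end (i : ℕ) (α : AExp N σ) (β : PExp N σ) (fs : List (ℕ × AExp N σ)) (χ χ' : AExp N σ) :
      Deriv R none i α (.eps i) → Norm R i β χ → Deriv R none i χ χ' →
      Deriv R none i (.seq α β fs) χ'
  | seq_eps_j (c : Option σ) (i j : ℕ) (α : AExp N σ) (β : PExp N σ)
      (fs : List (ℕ × AExp N σ)) (γ γ' : AExp N σ) :
      Deriv R c i α (.eps j) → j < i → (j, γ) ∈ fs → Deriv R c i γ γ' →
      Deriv R c i (.seq α β fs) γ'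
  | seq_other (c : Option σ) (i : ℕ) (α : AExp N σ) (β : PExp N σ)
      (fs : List (ℕ × AExp N σ)) (α' : AExp N σ) (fs' : List (ℕ × AExp N σ)) :
      Deriv R c i α α' → α' ≠ .fail → (∀ j, α' ≠ .eps j) →
      (∀ j, (∃ γ', (j, γ') ∈ fs') ↔ BackMem α' j) →
      (∀ j γ' γ'', (j, γ') ∈ fs' → (j, γ'') ∈ fs' → γ' = γ'') →
      (∀ γ', (i, γ') ∈ fs' → Norm R i β γ') →
      (∀ j, j < i → (∃ γ', (j, γ') ∈ fs') → ∃ γ, (j, γ) ∈ fs) →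
      (∀ j γ γ', j < i → (j, γ) ∈ fs → (j, γ') ∈ fs' → Deriv R c i γ γ') →
      Deriv R c i (.seq α β fs) (.seq α' β fs')
  | alt_fail_l (c : Option σ) (i : ℕ) (α β α' β' : AExp N σ) :
      Deriv R c i α .fail → Deriv R c i β β' → Deriv R c i (.alt α β) β'
  | alt_take_l_match (c : Option σ) (i : ℕ) (α β α' : AExp N σ) (m : ℕ) :
      Deriv R c i α α' → α' ≠ .fail → MatchMem α' m →
      Deriv R c i (.alt α β) α'
  | alt_take_l_bfail (c : Option σ) (i : ℕ) (α β α' : AExp N σ) :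
      Deriv R c i α α' → α' ≠ .fail → Deriv R c i β .fail →
      Deriv R c i (.alt α β) α'
  | alt_other (c : Option σ) (i : ℕ) (α β α' β' : AExp N σ) :
      Deriv R c i α α' → Deriv R c i β β' →
      α' ≠ .fail → β' ≠ .fail → (∀ m, ¬ MatchMem α' m) →
      Deriv R c i (.alt α β) (.alt α' β')

/-- Repeated string derivative: `DerivN R w k m φ ψ` means
`ψ = (d_{s_m,m} ∘ ⋯ ∘ d_{s_{k+1},k+1})(φ)`, where `s_j` is the j-th
(1-indexed) character of the full input `w`. -/
inductive DerivN (R : N → PExp N σ) (w : List σ) : ℕ → ℕ → AExp N σ → AExp N σ → Prop where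
  | done (k : ℕ) (φ : AExp N σ) : DerivN R w k k φ φ
  | step (k m : ℕ) (φ χ ψ : AExp N σ) (c : σ) :
      w[k]? = some c → Deriv R (some c) (k+1) φ χ → DerivN R w (k+1) m χ ψ →
      DerivN R w k m φ ψ

end PEG

namespace PEG
/-- An expression is in simplified form: none of the simplification rules of
Table 1 applies to any of its (immediate) subexpressions. -/
inductive Simplified (R : N → PExp N σ) : PExp N σ → Prop where
  | chr (a : σ) : Simplified R (.chr a)
  | eps : Simplified R .eps
  | fail : Simplified R .fail
  | nt (A : N) : R A ≠ .fail → Simplified R (.nt A)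
  | neg (α : PExp N σ) : Simplified R α → ¬ Nu R α → α ≠ .fail →
      (∀ γ, α ≠ .neg (.neg γ)) → Simplified R (.neg α)
  | seq (α β : PExp N σ) : Simplified R α → Simplified R β →
      α ≠ .eps → α ≠ .fail → β ≠ .eps → β ≠ .fail → Simplified R (.seq α β)
  | alt (α β : PExp N σ) : Simplified R α → Simplified R β →
      ¬ Nu R α → α ≠ .fail → β ≠ .fail → Simplified R (.alt α β)
end PEG

namespace PEG

variable {N σ : Type} {R : N → PExp N σ} {k : ℕ} {φ : PExp N σ} {ψ : AExp N σ}

theorem Nu.lam (h : Nu R φ) : Lam R φ := by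
  induction h with
  | eps => exact .eps
  | nt A _ ih => exact .nt A ih
  | seq α β _ _ ihα ihβ => exact .seq α β ihα ihβ
  | altl α β _ ih => exact .altl α β ih
  | altr α β _ ih => exact .altr α β ih

theorem Norm.eq_of_matchMem (hn : Norm R k φ ψ) {j : ℕ} (h : MatchMem ψ j) : j = k := by
  induction hn generalizing j with
  | chr | fail => cases h
  | eps => cases h; rfl
  | nt _ _ _ ih => exact ih h
  | neg => cases h
  | seq_lam _ _ _ _ _ _ _ _ ihχ =>
    cases h with
    | seq _ _ _ _ _ _ _ hmem hγ =>
      obtain ⟨-, rfl⟩ := Prod.mk.inj (List.mem_singleton.1 hmem)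
      exact ihχ hγ
  | seq_nolam =>
    cases h with
    | seq _ _ _ _ _ _ _ hmem => cases hmem
  | alt _ _ _ _ _ _ _ ihχ =>
    cases h with
    | alt _ _ _ hχ => exact ihχ hχ

theorem Norm.eq_of_backMem (hn : Norm R k φ ψ) {j : ℕ} (h : BackMem ψ j) : j = k := by
  induction hn generalizing j with
  | chr | fail => cases h
  | eps | neg => cases h; rfl
  | nt _ _ _ ih => exact ih h
  | seq_lam _ _ _ _ _ _ _ _ ihχ =>
    cases h with
    | seq _ _ _ _ _ _ hmem hγ =>
      obtain ⟨-, rfl⟩ := Prod.mk.inj (List.mem_singleton.1 hmem)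
      exact ihχ hγ
  | seq_nolam =>
    cases h with
    | seq _ _ _ _ _ _ hmem => cases hmem
  | alt _ _ _ _ _ _ ihψ ihχ =>
    cases h with
    | altl _ _ _ hψ => exact ihψ hψ
    | altr _ _ _ hχ => exact ihχ hχ

theorem Norm.backMem_of_lam (hn : Norm R k φ ψ) (hl : Lam R φ) : BackMem ψ k := by
  induction hn with
  | chr | fail => cases hl
  | eps => exact .eps _
  | nt _ _ _ ih => cases hl with | nt _ hA => exact ih hA
  | neg => exact .neg _ _
  | seq_lam _ β ψ χ _ _ _ _ ihχ =>
    cases hl with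
    | seq _ _ _ hβ => exact .seq ψ β _ k χ k (List.mem_singleton_self _) (ihχ hβ)
  | seq_nolam _ _ _ hβ => cases hl with | seq _ _ _ hβ' => exact absurd hβ' hβ
  | alt _ _ ψ χ _ _ ihψ ihχ =>
    cases hl with
    | altl _ _ hα => exact .altl ψ χ _ (ihψ hα)
    | altr _ _ hβ => exact .altr ψ χ _ (ihχ hβ)

/-- `match` of an alternation sees only its second branch; the alternation case goes through
because simplification (`η/β ≡ η` for nullable `η`) leaves no nullable first branch. -/
theorem Norm.matchMem_of_nu (hg : ∀ A, Simplified R (R A)) (hn : Norm R k φ ψ)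
    (hs : Simplified R φ) (hν : Nu R φ) : MatchMem ψ k := by
  induction hn with
  | chr | fail | neg => cases hν
  | eps => exact .eps _
  | nt A _ _ ih => cases hν with | nt _ hA => exact ih (hg A) hA
  | seq_lam _ β ψ χ _ _ _ ihψ ihχ =>
    cases hs with
    | seq _ _ hsα hsβ =>
      cases hν with
      | seq _ _ hα hβ =>
        exact .seq ψ β _ k χ k (ihψ hsα hα) (List.mem_singleton_self _) (ihχ hsβ hβ)
  | seq_nolam _ _ _ hβ => cases hν with | seq _ _ _ hβ' => exact absurd hβ'.lam hβ
  | alt _ _ ψ χ _ _ _ ihχ =>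
    cases hs with
    | alt _ _ _ hsβ hνα =>
      cases hν with
      | altl _ _ hα => exact absurd hα hνα
      | altr _ _ hβ => exact .alt ψ χ _ (ihχ hsβ hβ)

end PEG

theorem nullability_equivalence_general {N σ : Type} (R : N → PEG.PExp N σ)
    (φ : PEG.PExp N σ) (ψ : PEG.AExp N σ) (k : ℕ)
    (hs : PEG.Simplified R φ)
    (hg : ∀ A, PEG.Simplified R (R A)) (hn : PEG.Norm R k φ ψ) :
    (PEG.Nu R φ → {j | PEG.MatchMem ψ j} = ({k} : Set ℕ)) ∧
    (PEG.Lam R φ → {j | PEG.BackMem ψ j} = ({k} : Set ℕ)) :=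
  ⟨fun hν => Set.eq_singleton_iff_unique_mem.2
      ⟨hn.matchMem_of_nu hg hs hν, fun _ => hn.eq_of_matchMem⟩,
    fun hl => Set.eq_singleton_iff_unique_mem.2
      ⟨hn.backMem_of_lam hl, fun _ => hn.eq_of_backMem⟩⟩

/-- Nullability equivalence: for a well-formed un-normalized
parsing expression φ kept in simplified form, ν(φ) implies
match([φ]_k) = {k} and λ(φ) implies back([φ]_k) = {k}. -/
theorem nullability_equivalence {N σ : Type} (R : N → PEG.PExp N σ)
    (φ : PEG.PExp N σ) (ψ : PEG.AExp N σ) (k : ℕ)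
    (hwf : PEG.WellFormed R φ) (hs : PEG.Simplified R φ)
    (hg : ∀ A, PEG.Simplified R (R A)) (hn : PEG.Norm R k φ ψ) :
    (PEG.Nu R φ → {j | PEG.MatchMem ψ j} = ({k} : Set ℕ)) ∧
    (PEG.Lam R φ → {j | PEG.BackMem ψ j} = ({k} : Set ℕ)) :=
  nullability_equivalence_general R φ ψ k hs hg hn
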